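/- arXiv:1112.1275 — 4 statements merged into one kernel-verified Lean document; each statement's English description precedes it below -/
import Mathlib

section
/- The negative entropy prox-function d(x) = ln(n) + Σ_{i=1}^n x_i ln(x_i) is strongly convex with modulus 1 with respect to the ℓ1-norm on the standard simplex Δ_n = {x ∈ ℝ^n : x ≥ 0, Σ_i x_i = 1}; that is, for all x, y ∈ Δ_n and t ∈ [0,1], d(tx + (1-t)y) ≤ t·d(x) + (1-t)·d(y) - (1/2)·t·(1-t)·‖x - y‖_1². -/
/-! With `z = t • x + (1 - t) • y`, the convexity gap `t d(x) + (1 - t) d(y) - d(z)` equals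
`t KL(x ‖ z) + (1 - t) KL(y ‖ z)`, while `‖x - z‖₁ = (1 - t) ‖x - y‖₁` and `‖y - z‖₁ = t ‖x - y‖₁`.
Pinsker's inequality `KL(p ‖ q) ≥ ½ ‖p - q‖₁²` therefore bounds the gap below by
`½ (t (1 - t)² + (1 - t) t²) ‖x - y‖₁² = ½ t (1 - t) ‖x - y‖₁²`.

Pinsker's inequality is obtained from the pointwise bound `q klFun (p / q) ≥ 3 (p - q)² / (2 (p + 2 q))`
(a convexity argument on the real line) by Cauchy–Schwarz with weights `p + 2 q`, which sum to `3`. -/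

open Real Finset InformationTheory

lemma three_halves_mul_sq_div_le_klFun {r : ℝ} (hr : 0 ≤ r) :
    3 / 2 * ((r - 1) ^ 2 / (r + 2)) ≤ klFun r := by
  let g : ℝ → ℝ := fun r ↦ klFun r - (3 / 2 * (r - 4) + 27 / 2 * (r + 2)⁻¹)
  let g' : ℝ → ℝ := fun r ↦ log r - 3 / 2 + 27 / 2 * ((r + 2) ^ 2)⁻¹
  have hg : ∀ s, 0 < s → HasDerivAt g (g' s) s := fun s hs ↦ by
    have h := (hasDerivAt_klFun hs.ne').sub ((((hasDerivAt_id' s).sub_const 4).const_mul (3 / 2)).add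
      ((((hasDerivAt_id' s).add_const 2).fun_inv (by positivity)).const_mul (27 / 2)))
    exact h.congr_deriv (by simp only [g']; ring)
  have hg' : ∀ s, 0 < s → HasDerivAt g' (s⁻¹ - 27 * ((s + 2) ^ 3)⁻¹) s := fun s hs ↦ by
    have h := ((hasDerivAt_log hs.ne').sub_const (3 / 2)).add
      (((((hasDerivAt_id' s).add_const 2).fun_pow 2).fun_inv (by positivity)).const_mul (27 / 2))
    exact h.congr_deriv (by field_simp; ring)
  have hconv : ConvexOn ℝ (Set.Ici 0) g := by
    refine convexOn_of_hasDerivWithinAt2_nonneg (convex_Ici 0) ?_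
      (fun s hs ↦ (hg s (by simpa using hs)).hasDerivWithinAt)
      (fun s hs ↦ (hg' s (by simpa using hs)).hasDerivWithinAt) fun s hs ↦ ?_
    · have : ∀ s ∈ Set.Ici (0 : ℝ), s + 2 ≠ 0 := fun s hs ↦ by simp at hs; positivity
      fun_prop (disch := assumption)
    · simp only [interior_Ici, Set.mem_Ioi] at hs
      rw [sub_nonneg, ← div_eq_mul_inv, div_le_iff₀ (by positivity), inv_mul_eq_div, le_div_iff₀ hs]
      -- `(s + 2) ^ 3 - 27 * s = (s - 1) ^ 2 * (s + 8)`
      nlinarith [sq_nonneg (s - 1)]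
  have hmin : IsMinOn g (Set.Ici 0) 1 := by
    refine hconv.isMinOn_of_rightDeriv_eq_zero (by simp) ?_
    rw [(hg 1 one_pos).hasDerivWithinAt.derivWithin (uniqueDiffWithinAt_Ioi 1)]
    norm_num [g']
  have key : g 1 ≤ g r := hmin hr
  norm_num [g, klFun_one] at key
  calc 3 / 2 * ((r - 1) ^ 2 / (r + 2)) = 3 / 2 * (r - 4) + 27 / 2 * (r + 2)⁻¹ := by
        field_simp; ring
    _ ≤ klFun r := key

lemma three_halves_mul_sq_div_le_mul_log_sub {p q : ℝ} (hp : 0 ≤ p) (hq : 0 ≤ q)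
    (hpq : q = 0 → p = 0) :
    3 / 2 * ((p - q) ^ 2 / (p + 2 * q)) ≤ p * (log p - log q) - p + q := by
  rcases hq.eq_or_lt with rfl | hq
  · simp [hpq rfl]
  have hlog : p * log (p / q) = p * (log p - log q) := by
    rcases hp.eq_or_lt with rfl | hp
    · simp
    · rw [log_div hp.ne' hq.ne']
  calc 3 / 2 * ((p - q) ^ 2 / (p + 2 * q)) = q * (3 / 2 * ((p / q - 1) ^ 2 / (p / q + 2))) := by
        field_simp
    _ ≤ q * klFun (p / q) := by gcongr; exact three_halves_mul_sq_div_le_klFun (by positivity)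
    _ = p * (log p - log q) - p + q := by
        rw [klFun_apply, ← hlog]
        field_simp
        ring

section

variable {ι : Type*} [Fintype ι]

lemma sq_sum_abs_sub_le_three_mul_sum_sq_div {p q : ι → ℝ}
    (hp : p ∈ stdSimplex ℝ ι) (hq : q ∈ stdSimplex ℝ ι) :
    (∑ i, |p i - q i|) ^ 2 ≤ 3 * ∑ i, (p i - q i) ^ 2 / (p i + 2 * q i) := by
  have hw : ∀ i, 0 ≤ p i + 2 * q i := fun i ↦ by linarith [hp.1 i, hq.1 i]
  have hw_sum : ∑ i, (p i + 2 * q i) = 3 := by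
    rw [sum_add_distrib, ← mul_sum, hp.2, hq.2]
    norm_num
  have hcs := sum_sq_le_sum_mul_sum_of_sq_le_mul univ (r := fun i ↦ |p i - q i|)
    (fun i _ ↦ div_nonneg (sq_nonneg (p i - q i)) (hw i)) (fun i _ ↦ hw i) fun i _ ↦ by
      rcases (hw i).eq_or_lt with h0 | h0
      · have hp0 : p i = 0 := by linarith [hp.1 i, hq.1 i]
        have hq0 : q i = 0 := by linarith [hq.1 i]
        simp [hp0, hq0]
      · rw [sq_abs, div_mul_cancel₀ _ h0.ne']
  rw [hw_sum] at hcs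
  linarith

/-- `∑ i, p i * (log (p i) - log (q i))` is the Kullback–Leibler divergence of `p` from `q`. -/
theorem pinsker_of_mem_stdSimplex {p q : ι → ℝ}
    (hp : p ∈ stdSimplex ℝ ι) (hq : q ∈ stdSimplex ℝ ι) (hpq : ∀ i, q i = 0 → p i = 0) :
    (∑ i, |p i - q i|) ^ 2 ≤ 2 * ∑ i, p i * (log (p i) - log (q i)) := by
  have hsum := sum_le_sum fun i (_ : i ∈ univ) ↦
    three_halves_mul_sq_div_le_mul_log_sub (hp.1 i) (hq.1 i) (hpq i)
  rw [← mul_sum, sum_add_distrib, sum_sub_distrib, hp.2, hq.2] at hsum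
  linarith [sq_sum_abs_sub_le_three_mul_sum_sq_div hp hq]

lemma sum_abs_sub_smul_add_smul (x y : ι → ℝ) {a b : ℝ} (hab : a + b = 1) :
    ∑ i, |x i - (a • x + b • y) i| = |b| * ∑ i, |x i - y i| := by
  obtain rfl : a = 1 - b := by linarith
  rw [mul_sum]
  refine sum_congr rfl fun i _ ↦ ?_
  rw [← abs_mul]
  simp only [Pi.add_apply, Pi.smul_apply, smul_eq_mul]
  ring_nf

lemma mul_sum_mul_log_add_mul_sum_mul_log_eq (x y : ι → ℝ) (a b : ℝ) :
    a * ∑ i, x i * log (x i) + b * ∑ i, y i * log (y i) =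
      ∑ i, (a • x + b • y) i * log ((a • x + b • y) i) +
        (a * ∑ i, x i * (log (x i) - log ((a • x + b • y) i)) +
          b * ∑ i, y i * (log (y i) - log ((a • x + b • y) i))) := by
  simp only [mul_sum, ← sum_add_distrib, Pi.add_apply, Pi.smul_apply, smul_eq_mul]
  exact sum_congr rfl fun i _ ↦ by ring

end

theorem entropy_strongly_convex_l1_general (n : ℕ)
    (d : (Fin n → ℝ) → ℝ)
    (hd : ∀ x, d x = Real.log n + ∑ i, x i * Real.log (x i))
    (x y : Fin n → ℝ)
    (hx : x ∈ stdSimplex ℝ (Fin n)) (hy : y ∈ stdSimplex ℝ (Fin n))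
    (t : ℝ) (ht0 : 0 ≤ t) (ht1 : t ≤ 1) :
    d (t • x + (1 - t) • y) ≤
      t * d x + (1 - t) * d y - (1 / 2) * t * (1 - t) * (∑ i, |x i - y i|) ^ 2 := by
  rcases ht0.eq_or_lt with rfl | ht0
  · simp
  rcases ht1.eq_or_lt with rfl | ht1
  · simp
  have ht1' : 0 < 1 - t := sub_pos.2 ht1
  set z := t • x + (1 - t) • y with hz_def
  have hz : z ∈ stdSimplex ℝ (Fin n) := convex_stdSimplex ℝ _ hx hy ht0.le ht1'.le (by ring)
  have hzi : ∀ i, z i = t * x i + (1 - t) * y i := fun i ↦ rfl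
  have hxz : ∀ i, z i = 0 → x i = 0 := fun i hi ↦ by
    nlinarith [hzi i, mul_nonneg ht0.le (hx.1 i), mul_nonneg ht1'.le (hy.1 i)]
  have hyz : ∀ i, z i = 0 → y i = 0 := fun i hi ↦ by
    nlinarith [hzi i, mul_nonneg ht0.le (hx.1 i), mul_nonneg ht1'.le (hy.1 i)]
  have hdx : ∑ i, |x i - z i| = (1 - t) * ∑ i, |x i - y i| := by
    rw [sum_abs_sub_smul_add_smul x y (by ring), abs_of_pos ht1']
  have hdy : ∑ i, |y i - z i| = t * ∑ i, |x i - y i| := by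
    rw [hz_def, add_comm, sum_abs_sub_smul_add_smul y x (by ring), abs_of_pos ht0]
    simp_rw [abs_sub_comm (y _)]
  have hpx := pinsker_of_mem_stdSimplex hx hz hxz
  have hpy := pinsker_of_mem_stdSimplex hy hz hyz
  have hgap := mul_sum_mul_log_add_mul_sum_mul_log_eq x y t (1 - t)
  rw [hdx] at hpx
  rw [hdy] at hpy
  rw [← hz_def] at hgap
  rw [hd, hd, hd]
  linarith [mul_le_mul_of_nonneg_left hpx ht0.le, mul_le_mul_of_nonneg_left hpy ht1'.le]

/-- The negative entropy prox-function `d(x) = ln n + ∑ x_i ln x_i` is strongly convex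
with modulus 1 w.r.t. the ℓ1-norm on the standard simplex. -/
theorem entropy_strongly_convex_l1 (n : ℕ) (hn : 1 ≤ n)
    (d : (Fin n → ℝ) → ℝ)
    (hd : ∀ x, d x = Real.log n + ∑ i, x i * Real.log (x i))
    (x y : Fin n → ℝ)
    (hx : x ∈ stdSimplex ℝ (Fin n)) (hy : y ∈ stdSimplex ℝ (Fin n))
    (t : ℝ) (ht0 : 0 ≤ t) (ht1 : t ≤ 1) :
    d (t • x + (1 - t) • y) ≤
      t * d x + (1 - t) * d y - (1 / 2) * t * (1 - t) * (∑ i, |x i - y i|) ^ 2 :=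
  entropy_strongly_convex_l1_general n d hd x y hx hy t ht0 ht1
end

section
/- For any sequence of loss vectors g_0, ..., g_{T-1} ∈ ℝ^n, any positive weights λ_0, ..., λ_{T-1}, any x_0,...,x_{T-1} ∈ Q, and any D ≥ 0, the scaled regret satisfies: (1/Σ_{k<T} λ_k) · max{ Σ_{t<T} λ_t ⟨g_t, x_t - x⟩ : x ∈ Q, d(x) ≤ D } ≤ (1/Σ_{k<T} λ_k) · ( β_T D + (1/2) Σ_{t<T} (λ_t²/β_t) ‖g_t‖_*² ), where the iterates are generated by the Dual Averaging method: s_0 = 0, x_0 = argmin_{x∈Q} d(x), s_{t+1} = s_t - λ_t g_t, x_{t+1} = argmax_{x∈Q} { ⟨s_{t+1}, x - x_0⟩ - β_{t+1} d(x) }, with β_0 ≤ β_1 ≤ ... a positive non-decreasing sequence. -/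
/-!
The optimal value `ψₜ = max_{y ∈ Q} ⟨sₜ, y - x₀⟩ - βₜ d(y)`, attained at `xₜ`, is a potential.
The objective is `βₜ`-strongly concave, so its maximiser beats any `y ∈ Q` by `βₜ/2 ‖y - xₜ‖²`.
Evaluating at `y = xₜ₊₁`, using `βₜ ≤ βₜ₊₁` and `d ≥ 0`, and absorbing the error term
`λₜ⟨gₜ, xₜ - xₜ₊₁⟩ ≤ λₜ‖gₜ‖_* ‖xₜ₊₁ - xₜ‖` into the quadratic gap (Young's inequality) gives
`ψₜ₊₁ + λₜ⟨gₜ, xₜ - x₀⟩ ≤ ψₜ + λₜ²‖gₜ‖_*²/(2βₜ)`. Summing this from `ψ₀ = 0`, and bounding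
`ψ_T` below by the value at the competitor `z`, where `s_T = -∑ λₜ gₜ`, gives the regret bound.
-/

open Finset Filter Topology

theorem Seminorm.exists_le_mul_of_finiteDimensional {E : Type*} [AddCommGroup E] [Module ℝ E]
    [FiniteDimensional ℝ E] (p : Seminorm ℝ E) (hp : ∀ v, p v = 0 → v = 0) (φ : Module.Dual ℝ E) :
    ∃ C ≥ 0, ∀ v, φ v ≤ C * p v := by
  -- make `p` the norm of `E`; in finite dimension `φ` is then continuous
  let _ : NormedAddCommGroup E :=
    @NormedAddCommGroup.ofSeparation E p.toAddGroupSeminorm.toSeminormedAddCommGroup hp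
  let _ : NormedSpace ℝ E := ⟨fun c v => (map_smul_eq_mul p c v).le⟩
  let ψ : E →L[ℝ] ℝ := LinearMap.toContinuousLinearMap φ
  exact ⟨‖ψ‖, norm_nonneg ψ, fun v => (le_abs_self _).trans (ψ.le_opNorm v)⟩

section DualNorm

variable {ι : Type*} [Fintype ι]

noncomputable def dualNorm (N : (ι → ℝ) → ℝ) (u : ι → ℝ) : ℝ :=
  sSup {r : ℝ | ∃ v, N v ≤ 1 ∧ r = u ⬝ᵥ v}

theorem dotProduct_le_dualNorm_mul (p : Seminorm ℝ (ι → ℝ)) (hp : ∀ v, p v = 0 → v = 0)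
    (u w : ι → ℝ) : u ⬝ᵥ w ≤ dualNorm p u * p w := by
  obtain ⟨C, hC0, hC⟩ := p.exists_le_mul_of_finiteDimensional hp (dotProductBilin ℝ ℝ u)
  have hbdd : BddAbove {r : ℝ | ∃ v, p v ≤ 1 ∧ r = u ⬝ᵥ v} := by
    refine ⟨C, ?_⟩
    rintro r ⟨v, hv, rfl⟩
    exact (hC v).trans (mul_le_of_le_one_right hC0 hv)
  rcases (apply_nonneg p w).eq_or_lt with hw | hw
  · simp [hp w hw.symm]
  · have hmem : (p w)⁻¹ * u ⬝ᵥ w ∈ {r : ℝ | ∃ v, p v ≤ 1 ∧ r = u ⬝ᵥ v} := by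
      refine ⟨(p w)⁻¹ • w, ?_, by rw [dotProduct_smul, smul_eq_mul]⟩
      rw [map_smul_eq_mul, Real.norm_eq_abs, abs_of_pos (inv_pos.2 hw), inv_mul_cancel₀ hw.ne']
    have := le_csSup hbdd hmem
    rwa [inv_mul_le_iff₀ hw, mul_comm] at this

end DualNorm

section StrongConvexity

variable {E : Type*} [AddCommGroup E] [Module ℝ E]

/-- Strong convexity with modulus `σ`, measured by `N` instead of the ambient norm used by
`StrongConvexOn`. -/
def StrongConvexOnWrt (N : E → ℝ) (σ : ℝ) (Q : Set E) (f : E → ℝ) : Prop :=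
  ∀ x ∈ Q, ∀ y ∈ Q, ∀ t : ℝ, 0 ≤ t → t ≤ 1 →
    f (t • x + (1 - t) • y) ≤ t * f x + (1 - t) * f y - σ / 2 * t * (1 - t) * N (x - y) ^ 2

theorem StrongConvexOnWrt.add_sq_le_of_isMinOn {N : E → ℝ} {σ : ℝ} {Q : Set E} {f : E → ℝ}
    (hf : StrongConvexOnWrt N σ Q f) (hQ : Convex ℝ Q) {a y : E} (ha : a ∈ Q) (hy : y ∈ Q)
    (hmin : IsMinOn f Q a) : f a + σ / 2 * N (y - a) ^ 2 ≤ f y := by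
  have hsegment : ∀ t ∈ Set.Ioc (0 : ℝ) 1, f a + σ / 2 * (1 - t) * N (y - a) ^ 2 ≤ f y := by
    rintro t ⟨ht0, ht1⟩
    have hmin_t : f a ≤ f (t • y + (1 - t) • a) :=
      hmin (hQ hy ha ht0.le (sub_nonneg.2 ht1) (add_sub_cancel t 1))
    have hconv := hf y hy a ha t ht0.le ht1
    refine le_of_mul_le_mul_left ?_ ht0
    linarith
  have hlim : Tendsto (fun t : ℝ => f a + σ / 2 * (1 - t) * N (y - a) ^ 2) (𝓝[>] 0)
      (𝓝 (f a + σ / 2 * N (y - a) ^ 2)) := by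
    have hcont : Continuous fun t : ℝ => f a + σ / 2 * (1 - t) * N (y - a) ^ 2 := by fun_prop
    simpa using (hcont.tendsto 0).mono_left nhdsWithin_le_nhds
  exact le_of_tendsto hlim (eventually_of_mem (Ioc_mem_nhdsGT one_pos) hsegment)

end StrongConvexity

theorem mul_le_half_mul_sq_add_sq_div {β : ℝ} (hβ : 0 < β) (a r : ℝ) :
    a * r ≤ β / 2 * r ^ 2 + a ^ 2 / (2 * β) := by
  have key : a * r * (2 * β) ≤ (β / 2 * r ^ 2 + a ^ 2 / (2 * β)) * (2 * β) := by
    rw [add_mul, div_mul_cancel₀ _ (by positivity)]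
    nlinarith [two_mul_le_add_sq (β * r) a]
  exact le_of_mul_le_mul_right key (by positivity)

theorem add_sum_range_le_of_succ_le {a b c : ℕ → ℝ} (h : ∀ t, a (t + 1) + b t ≤ a t + c t)
    (T : ℕ) : a T + ∑ t ∈ range T, b t ≤ a 0 + ∑ t ∈ range T, c t := by
  have := sum_le_sum fun t (_ : t ∈ range T) => (by linarith [h t] : b t ≤ a t - a (t + 1) + c t)
  rw [sum_add_distrib, sum_range_sub'] at this
  linarith

section DualAveraging

variable {ι : Type*} [Fintype ι] {Q : Set (ι → ℝ)} {p : Seminorm ℝ (ι → ℝ)} {d : (ι → ℝ) → ℝ}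

theorem StrongConvexOnWrt.const_mul_sub_dotProduct {N : (ι → ℝ) → ℝ} {σ : ℝ}
    (hd : StrongConvexOnWrt N σ Q d) {β : ℝ} (hβ : 0 ≤ β) (c x₀ : ι → ℝ) :
    StrongConvexOnWrt N (β * σ) Q (fun y => β * d y - c ⬝ᵥ (y - x₀)) := by
  intro x hx y hy t ht0 ht1
  have hlin : c ⬝ᵥ (t • x + (1 - t) • y - x₀) = t * c ⬝ᵥ (x - x₀) + (1 - t) * c ⬝ᵥ (y - x₀) := by
    simp only [dotProduct_sub, dotProduct_add, dotProduct_smul, smul_eq_mul]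
    ring
  have hconv := mul_le_mul_of_nonneg_left (hd x hx y hy t ht0 ht1) hβ
  simp only [hlin]
  linarith

theorem dualAveraging_step (hQ : Convex ℝ Q) (hp : ∀ v, p v = 0 → v = 0)
    (hd : StrongConvexOnWrt p 1 Q d) {x₀ c g x x' : ι → ℝ} {l β β' : ℝ} (hl : 0 ≤ l) (hβ : 0 < β)
    (hββ' : β ≤ β') (hx : x ∈ Q) (hx' : x' ∈ Q) (hdx' : 0 ≤ d x')
    (hmin : IsMinOn (fun y => β * d y - c ⬝ᵥ (y - x₀)) Q x) :
    (c - l • g) ⬝ᵥ (x' - x₀) - β' * d x' + l * g ⬝ᵥ (x - x₀) ≤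
      c ⬝ᵥ (x - x₀) - β * d x + 1 / 2 * (l ^ 2 / β * dualNorm p g ^ 2) := by
  have hgap := (hd.const_mul_sub_dotProduct hβ.le c x₀).add_sq_le_of_isMinOn hQ hx hx' hmin
  have hdual := mul_le_mul_of_nonneg_left (dotProduct_le_dualNorm_mul p hp g (x - x')) hl
  have hyoung := mul_le_half_mul_sq_add_sq_div hβ (l * dualNorm p g) (p (x' - x))
  have hsq : (l * dualNorm p g) ^ 2 / (2 * β) = 1 / 2 * (l ^ 2 / β * dualNorm p g ^ 2) := by
    field_simp
  have hmono : β * d x' ≤ β' * d x' := mul_le_mul_of_nonneg_right hββ' hdx'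
  have hsplit : (c - l • g) ⬝ᵥ (x' - x₀) =
      c ⬝ᵥ (x' - x₀) - l * g ⬝ᵥ (x - x₀) + l * g ⬝ᵥ (x - x') := by
    simp only [sub_dotProduct, dotProduct_sub, smul_dotProduct, smul_eq_mul]
    ring
  rw [map_sub_rev] at hdual
  simp only [mul_one] at hgap
  linarith

theorem dualAveraging_regret_le (hQ : Convex ℝ Q) (hp : ∀ v, p v = 0 → v = 0)
    (hd : StrongConvexOnWrt p 1 Q d) (hd0 : ∀ y ∈ Q, 0 ≤ d y) {lam beta : ℕ → ℝ}
    (hlam : ∀ t, 0 ≤ lam t) (hbeta : ∀ t, 0 < beta t) (hbetamono : Monotone beta)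
    {g s x : ℕ → ι → ℝ} (hs0 : s 0 = 0) (hsrec : ∀ t, s (t + 1) = s t - lam t • g t)
    (hdx0 : d (x 0) = 0) (hxQ : ∀ t, x t ∈ Q)
    (hmin : ∀ t, IsMinOn (fun y => beta t * d y - s t ⬝ᵥ (y - x 0)) Q (x t))
    (T : ℕ) {z : ι → ℝ} (hz : z ∈ Q) :
    ∑ t ∈ range T, lam t * g t ⬝ᵥ (x t - z) ≤
      beta T * d z + 1 / 2 * ∑ t ∈ range T, lam t ^ 2 / beta t * dualNorm p (g t) ^ 2 := by
  have hpotential := add_sum_range_le_of_succ_le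
    (a := fun t => s t ⬝ᵥ (x t - x 0) - beta t * d (x t)) (fun t => by
      rw [hsrec]
      exact dualAveraging_step hQ hp hd (hlam t) (hbeta t) (hbetamono t.le_succ) (hxQ t)
        (hxQ (t + 1)) (hd0 _ (hxQ (t + 1))) (hmin t)) T
  simp only [hs0, hdx0, zero_dotProduct, mul_zero, sub_zero, zero_add, ← mul_sum] at hpotential
  have hsT : s T = -∑ t ∈ range T, lam t • g t := by
    simpa [hsrec, hs0] using (sum_range_sub s T).symm
  have hsz : s T ⬝ᵥ (z - x 0) = -∑ t ∈ range T, lam t * g t ⬝ᵥ (z - x 0) := by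
    rw [hsT, neg_dotProduct, sum_dotProduct]
    simp only [smul_dotProduct, smul_eq_mul]
  have hsplit : ∑ t ∈ range T, lam t * g t ⬝ᵥ (x t - z) =
      ∑ t ∈ range T, lam t * g t ⬝ᵥ (x t - x 0) - ∑ t ∈ range T, lam t * g t ⬝ᵥ (z - x 0) := by
    rw [← sum_sub_distrib]
    refine sum_congr rfl fun t _ => ?_
    rw [← mul_sub, ← dotProduct_sub, sub_sub_sub_cancel_right]
  have hzT := isMinOn_iff.1 (hmin T) z hz
  linarith

end DualAveraging

theorem dual_averaging_regret_bound_general (n T : ℕ)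
    (Q : Set (Fin n → ℝ)) (hQconv : Convex ℝ Q)
    -- a norm `N` on ℝⁿ and its dual norm `Ns`
    (N Ns : (Fin n → ℝ) → ℝ)
    (hN0 : ∀ v, N v = 0 ↔ v = 0)
    (hNsmul : ∀ (c : ℝ) v, N (c • v) = |c| * N v)
    (hNadd : ∀ v w, N (v + w) ≤ N v + N w)
    (hNs : ∀ s, Ns s = sSup {r : ℝ | ∃ v, N v ≤ 1 ∧ r = ∑ i, s i * v i})
    -- the prox-function: continuous and strongly convex modulus 1 w.r.t. `N` on `Q`
    (d : (Fin n → ℝ) → ℝ)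
    (hdstrong : ∀ x ∈ Q, ∀ y ∈ Q, ∀ t : ℝ, 0 ≤ t → t ≤ 1 →
      d (t • x + (1 - t) • y) ≤ t * d x + (1 - t) * d y
        - (1 / 2) * t * (1 - t) * N (x - y) ^ 2)
    -- weights and projection parameters
    (lam beta : ℕ → ℝ) (hlam : ∀ t, 0 < lam t) (hbeta : ∀ t, 0 < beta t)
    (hbetamono : Monotone beta)
    -- the loss vectors returned by the oracle
    (g : ℕ → Fin n → ℝ)
    -- the dual variables
    (s : ℕ → Fin n → ℝ) (hs0 : s 0 = 0)
    (hsrec : ∀ t, s (t + 1) = s t - lam t • g t)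
    -- the iterates
    (x : ℕ → Fin n → ℝ)
    (hx0Q : x 0 ∈ Q) (hx0min : ∀ y ∈ Q, d (x 0) ≤ d y) (hdx0 : d (x 0) = 0)
    (hxQ : ∀ t, x (t + 1) ∈ Q)
    (hxmax : ∀ t, ∀ y ∈ Q,
      (∑ i, s (t + 1) i * (y i - x 0 i)) - beta (t + 1) * d y ≤
      (∑ i, s (t + 1) i * (x (t + 1) i - x 0 i)) - beta (t + 1) * d (x (t + 1))) :
    ∀ D : ℝ, 0 ≤ D → ∀ z ∈ Q, d z ≤ D →
      (1 / ∑ k ∈ Finset.range T, lam k) *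
          (∑ t ∈ Finset.range T, lam t * ∑ i, g t i * (x t i - z i)) ≤
      (1 / ∑ k ∈ Finset.range T, lam k) *
          (beta T * D + (1 / 2) * ∑ t ∈ Finset.range T, lam t ^ 2 / beta t * Ns (g t) ^ 2) := by
  intro D _ z hzQ hzD
  let p : Seminorm ℝ (Fin n → ℝ) := .of N hNadd (by simpa only [Real.norm_eq_abs] using hNsmul)
  have hd0 : ∀ y ∈ Q, 0 ≤ d y := fun y hy => hdx0 ▸ hx0min y hy
  have hxQ' : ∀ t, x t ∈ Q := by rintro (_ | t); exacts [hx0Q, hxQ t]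
  have hmin : ∀ t, IsMinOn (fun y => beta t * d y - s t ⬝ᵥ (y - x 0)) Q (x t) := by
    refine fun t => isMinOn_iff.2 fun y hy => ?_
    rcases t with _ | t
    · simpa [hs0, hdx0] using mul_nonneg (hbeta 0).le (hd0 y hy)
    · have hmax : s (t + 1) ⬝ᵥ (y - x 0) - beta (t + 1) * d y ≤
          s (t + 1) ⬝ᵥ (x (t + 1) - x 0) - beta (t + 1) * d (x (t + 1)) := hxmax t y hy
      linarith
  have hregret := dualAveraging_regret_le (p := p) hQconv (fun v => (hN0 v).1) hdstrong hd0
    (fun t => (hlam t).le) hbeta hbetamono hs0 hsrec hdx0 hxQ' hmin T hzQ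
  rw [show dualNorm p = Ns from (funext hNs).symm] at hregret
  refine mul_le_mul_of_nonneg_left ?_ (one_div_nonneg.2 (sum_nonneg fun k _ => (hlam k).le))
  exact hregret.trans (add_le_add_left (mul_le_mul_of_nonneg_left hzD (hbeta T).le) _)

/-- Nesterov's regret bound for Dual Averaging schemes (first part of Theorem 1 in
"Primal-dual subgradient methods"). `N` is a norm on ℝⁿ, `Ns` its dual norm, `d` a
prox-function on the closed convex set `Q`, strongly convex with modulus 1 w.r.t. `N`,
vanishing at its minimizer `x 0`.  The iterates accumulate the weighted losses in the
dual variable `s` and project back via the parametrized mirror operator. -/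
theorem dual_averaging_regret_bound (n T : ℕ) (hT : 1 ≤ T)
    (Q : Set (Fin n → ℝ)) (hQclosed : IsClosed Q) (hQconv : Convex ℝ Q)
    -- a norm `N` on ℝⁿ and its dual norm `Ns`
    (N Ns : (Fin n → ℝ) → ℝ)
    (hN0 : ∀ v, N v = 0 ↔ v = 0)
    (hNsmul : ∀ (c : ℝ) v, N (c • v) = |c| * N v)
    (hNadd : ∀ v w, N (v + w) ≤ N v + N w)
    (hNs : ∀ s, Ns s = sSup {r : ℝ | ∃ v, N v ≤ 1 ∧ r = ∑ i, s i * v i})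
    -- the prox-function: continuous and strongly convex modulus 1 w.r.t. `N` on `Q`
    (d : (Fin n → ℝ) → ℝ) (hdcont : ContinuousOn d Q)
    (hdstrong : ∀ x ∈ Q, ∀ y ∈ Q, ∀ t : ℝ, 0 ≤ t → t ≤ 1 →
      d (t • x + (1 - t) • y) ≤ t * d x + (1 - t) * d y
        - (1 / 2) * t * (1 - t) * N (x - y) ^ 2)
    -- weights and projection parameters
    (lam beta : ℕ → ℝ) (hlam : ∀ t, 0 < lam t) (hbeta : ∀ t, 0 < beta t)
    (hbetamono : Monotone beta)
    -- the loss vectors returned by the oracle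
    (g : ℕ → Fin n → ℝ)
    -- the dual variables
    (s : ℕ → Fin n → ℝ) (hs0 : s 0 = 0)
    (hsrec : ∀ t, s (t + 1) = s t - lam t • g t)
    -- the iterates
    (x : ℕ → Fin n → ℝ)
    (hx0Q : x 0 ∈ Q) (hx0min : ∀ y ∈ Q, d (x 0) ≤ d y) (hdx0 : d (x 0) = 0)
    (hxQ : ∀ t, x (t + 1) ∈ Q)
    (hxmax : ∀ t, ∀ y ∈ Q,
      (∑ i, s (t + 1) i * (y i - x 0 i)) - beta (t + 1) * d y ≤
      (∑ i, s (t + 1) i * (x (t + 1) i - x 0 i)) - beta (t + 1) * d (x (t + 1))) :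
    ∀ D : ℝ, 0 ≤ D → ∀ z ∈ Q, d z ≤ D →
      (1 / ∑ k ∈ Finset.range T, lam k) *
          (∑ t ∈ Finset.range T, lam t * ∑ i, g t i * (x t i - z i)) ≤
      (1 / ∑ k ∈ Finset.range T, lam k) *
          (beta T * D + (1 / 2) * ∑ t ∈ Finset.range T, lam t ^ 2 / beta t * Ns (g t) ^ 2) :=
  dual_averaging_regret_bound_general n T Q hQconv N Ns hN0 hNsmul hNadd hNs d hdstrong lam beta
    hlam hbeta hbetamono g s hs0 hsrec x hx0Q hx0min hdx0 hxQ hxmax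
end

section
/- Define the sequence β_0 = 1 and β_{t+1} = Σ_{k=0}^{t} 1/β_k for t ≥ 0. Then for all t ≥ 1, √(t-1) ≤ β_t ≤ (1/(1+√3)) + √(2t-1); in particular β_t is non-decreasing and β_T / T → 0 as T → ∞. -/
/-!
Past the first step the sequence is the orbit of `x ↦ x + 1/x`, and
`(x + 1/x)² = x² + 2 + 1/x²`, so `β_t²` grows by at least `2` per step: `β_t ≥ √(2t-1)`.
For the upper bound, write `c = 1/(1+√3)`, `a = √(2t-1)` and `b = √(2t+1)`. Since `x + 1/x` is
increasing on `[1, ∞)`, it suffices that `(c + a) + 1/(c + a) ≤ c + b`, i.e. `1/(c+a) ≤ b - a`.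
As `b - a = 2/(a+b)`, this amounts to `b - a ≤ 2c = √3 - 1`, which holds because `b - a`
decreases in `t` and equals `√3 - 1` at `t = 1`.
-/

open Filter Topology

lemma add_one_div_le_add_one_div {x y : ℝ} (hx : 1 ≤ x) (hxy : x ≤ y) :
    x + 1 / x ≤ y + 1 / y := by
  have hx0 : 0 < x := by linarith
  have hy0 : 0 < y := by linarith
  have hdiff : y + 1 / y - (x + 1 / x) = (y - x) * (x * y - 1) / (x * y) := by
    field_simp
    ring
  have hxy1 : 0 ≤ x * y - 1 := by nlinarith
  have := div_nonneg (mul_nonneg (sub_nonneg.2 hxy) hxy1) (mul_pos hx0 hy0).le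
  linarith

lemma sq_add_two_le_sq_add_one_div {x : ℝ} (hx : x ≠ 0) : x ^ 2 + 2 ≤ (x + 1 / x) ^ 2 := by
  have hexpand : (x + 1 / x) ^ 2 = x ^ 2 + 2 + (1 / x) ^ 2 := by
    field_simp
    ring
  nlinarith [sq_nonneg (1 / x)]

lemma add_add_one_div_le_of_sq_eq_sq_add_two {a b : ℝ} (ha : 1 ≤ a) (hb : 0 ≤ b)
    (hab : b ^ 2 = a ^ 2 + 2) :
    1 / (1 + √3) + a + 1 / (1 / (1 + √3) + a) ≤ 1 / (1 + √3) + b := by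
  set c := 1 / (1 + √3) with hc
  have hc0 : 0 < c := by positivity
  have hc1 : c * (1 + √3) = 1 := by
    rw [hc]
    field_simp
  have hsqrt3 : √3 ≤ b := by
    rw [Real.sqrt_le_left hb]
    nlinarith
  have hab0 : 0 ≤ b - a := by nlinarith
  have hgap : b - a ≤ 2 * c := by
    have hsum : (b - a) * (a + b) = 2 := by linear_combination hab
    nlinarith
  have hca : 1 ≤ (b - a) * (c + a) := by nlinarith
  have hinv : 1 / (c + a) ≤ b - a := by
    rw [div_le_iff₀ (by positivity)]
    exact hca
  linarith

lemma tendsto_div_natCast_atTop_of_le_add_mul_sqrt {u : ℕ → ℝ} {a b : ℝ}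
    (hu0 : ∀ᶠ n in atTop, 0 ≤ u n) (hu : ∀ᶠ n in atTop, u n ≤ a + b * √n) :
    Tendsto (fun n : ℕ => u n / n) atTop (𝓝 0) := by
  have hsqrt : Tendsto (fun n : ℕ => √(n : ℝ)) atTop atTop :=
    Real.tendsto_sqrt_atTop.comp tendsto_natCast_atTop_atTop
  have hbound : Tendsto (fun n : ℕ => a / n + b / √(n : ℝ)) atTop (𝓝 0) := by
    simpa using (tendsto_const_div_atTop_nhds_zero_nat a).add
      (tendsto_const_nhds.div_atTop hsqrt)
  refine squeeze_zero' (hu0.mono fun n hn => div_nonneg hn n.cast_nonneg) ?_ hbound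
  filter_upwards [hu] with n hn
  calc u n / n ≤ (a + b * √(n : ℝ)) / n := by gcongr
    _ = a / n + b / √(n : ℝ) := by
      rw [add_div, mul_div_assoc, Real.sqrt_div_self', mul_one_div]

section BetaSequence

variable {beta : ℕ → ℝ}

lemma beta_one (h0 : beta 0 = 1)
    (hrec : ∀ t : ℕ, beta (t + 1) = ∑ k ∈ Finset.range (t + 1), 1 / beta k) :
    beta 1 = 1 := by
  simp [hrec 0, h0]

lemma beta_succ (hrec : ∀ t : ℕ, beta (t + 1) = ∑ k ∈ Finset.range (t + 1), 1 / beta k)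
    {t : ℕ} (ht : 1 ≤ t) : beta (t + 1) = beta t + 1 / beta t := by
  obtain ⟨s, rfl⟩ := Nat.exists_eq_add_of_le' ht
  rw [hrec (s + 1), Finset.sum_range_succ, ← hrec s]

lemma one_le_beta (h0 : beta 0 = 1)
    (hrec : ∀ t : ℕ, beta (t + 1) = ∑ k ∈ Finset.range (t + 1), 1 / beta k) (t : ℕ) :
    1 ≤ beta t := by
  rcases Nat.eq_zero_or_pos t with rfl | ht
  · exact h0.ge
  induction t, ht using Nat.le_induction with
  | base => exact (beta_one h0 hrec).ge
  | succ t ht ih =>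
    rw [beta_succ hrec ht]
    have : 0 < 1 / beta t := by positivity
    linarith

lemma monotone_beta (h0 : beta 0 = 1)
    (hrec : ∀ t : ℕ, beta (t + 1) = ∑ k ∈ Finset.range (t + 1), 1 / beta k) :
    Monotone beta := by
  refine monotone_nat_of_le_succ fun t => ?_
  rcases Nat.eq_zero_or_pos t with rfl | ht
  · rw [h0, beta_one h0 hrec]
  · rw [beta_succ hrec ht]
    have : 0 < 1 / beta t := one_div_pos.2 (by linarith [one_le_beta h0 hrec t])
    linarith

lemma sqrt_two_mul_sub_one_le_beta (h0 : beta 0 = 1)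
    (hrec : ∀ t : ℕ, beta (t + 1) = ∑ k ∈ Finset.range (t + 1), 1 / beta k)
    {t : ℕ} (ht : 1 ≤ t) : √(2 * (t : ℝ) - 1) ≤ beta t := by
  rw [Real.sqrt_le_left (by linarith [one_le_beta h0 hrec t])]
  induction t, ht using Nat.le_induction with
  | base => norm_num [beta_one h0 hrec]
  | succ t ht ih =>
    have hpos : beta t ≠ 0 := by linarith [one_le_beta h0 hrec t]
    rw [beta_succ hrec ht]
    push_cast
    linarith [sq_add_two_le_sq_add_one_div hpos]

lemma beta_le_add_sqrt (h0 : beta 0 = 1)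
    (hrec : ∀ t : ℕ, beta (t + 1) = ∑ k ∈ Finset.range (t + 1), 1 / beta k)
    {t : ℕ} (ht : 1 ≤ t) : beta t ≤ 1 / (1 + √3) + √(2 * (t : ℝ) - 1) := by
  induction t, ht using Nat.le_induction with
  | base =>
    rw [beta_one h0 hrec]
    norm_num
    positivity
  | succ t ht ih =>
    have ht' : (1 : ℝ) ≤ t := by exact_mod_cast ht
    have ha : 1 ≤ √(2 * (t : ℝ) - 1) := by
      rw [Real.le_sqrt zero_le_one (by linarith)]
      linarith
    have hab : √(2 * ((t + 1 : ℕ) : ℝ) - 1) ^ 2 = √(2 * (t : ℝ) - 1) ^ 2 + 2 := by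
      rw [Real.sq_sqrt (by push_cast; linarith), Real.sq_sqrt (by linarith)]
      push_cast
      ring
    rw [beta_succ hrec ht]
    calc beta t + 1 / beta t
        ≤ (1 / (1 + √3) + √(2 * (t : ℝ) - 1)) + 1 / (1 / (1 + √3) + √(2 * (t : ℝ) - 1)) :=
          add_one_div_le_add_one_div (one_le_beta h0 hrec t) ih
      _ ≤ 1 / (1 + √3) + √(2 * ((t + 1 : ℕ) : ℝ) - 1) :=
          add_add_one_div_le_of_sq_eq_sq_add_two ha (Real.sqrt_nonneg _) hab

end BetaSequence

/-- Growth estimates for the recursive projection-parameter sequence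
`β₀ = 1`, `β_{t+1} = ∑_{k ≤ t} 1/β_k` (Lemma 3 in Nesterov's paper):
`√(t-1) ≤ β_t ≤ 1/(1+√3) + √(2t-1)` for all `t ≥ 1`; in particular the sequence is
non-decreasing and `β_T / T → 0`. -/
theorem beta_sequence_bounds (beta : ℕ → ℝ)
    (h0 : beta 0 = 1)
    (hrec : ∀ t : ℕ, beta (t + 1) = ∑ k ∈ Finset.range (t + 1), 1 / beta k) :
    (∀ t : ℕ, 1 ≤ t →
      Real.sqrt ((t : ℝ) - 1) ≤ beta t ∧
      beta t ≤ 1 / (1 + Real.sqrt 3) + Real.sqrt (2 * (t : ℝ) - 1)) ∧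
    Monotone beta ∧
    Filter.Tendsto (fun T : ℕ => beta T / T) Filter.atTop (nhds 0) := by
  have hbounds : ∀ t : ℕ, 1 ≤ t →
      √((t : ℝ) - 1) ≤ beta t ∧ beta t ≤ 1 / (1 + √3) + √(2 * (t : ℝ) - 1) := fun t ht =>
    ⟨(Real.sqrt_le_sqrt (by linarith)).trans (sqrt_two_mul_sub_one_le_beta h0 hrec ht),
      beta_le_add_sqrt h0 hrec ht⟩
  refine ⟨hbounds, monotone_beta h0 hrec, ?_⟩
  refine tendsto_div_natCast_atTop_of_le_add_mul_sqrt (a := 1 / (1 + √3)) (b := √2)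
    (Eventually.of_forall fun t => by linarith [one_le_beta h0 hrec t]) ?_
  filter_upwards [eventually_ge_atTop 1] with t ht
  calc beta t ≤ 1 / (1 + √3) + √(2 * (t : ℝ) - 1) := (hbounds t ht).2
    _ ≤ 1 / (1 + √3) + √2 * √(t : ℝ) := by
      rw [← Real.sqrt_mul zero_le_two]
      gcongr
      linarith
end

section
/- For the Hedge algorithm with γ = 1/(√(2ln(n)/T) + 1) and score function U(z) = γ^{(z+μ)/(μ+ρ)} applied to losses ℓ_{t,i} ∈ [-μ, ρ], the averaged regret satisfies (1/T)·(Σ_{t<T} ⟨ℓ_t, x_t⟩ - min_{1≤i≤n} Σ_{t<T} ℓ_{t,i}) ≤ (μ+ρ)·(ln(n)/T + √(2ln(n)/T)). -/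
/-!
Rescale the losses to `z = (ℓ + μ)/(μ + ρ) ∈ [0, 1]`. Since `γ ^ z ≤ 1 - (1 - γ) z` on `[0, 1]`,
each round multiplies the total weight `W_t` by at most `exp (-(1 - γ) ⟨z_t, x_t⟩)`, while `W_T`
is at least the weight `γ ^ Z_i / n` of any single expert. Taking logarithms gives the
Freund–Schapire bound `(1 - γ) ∑ ⟨z_t, x_t⟩ ≤ ln n + Z_i ln (1/γ)`. With `γ = 1/(1 + δ)` the
estimate `ln (1 + δ) ≤ sinh (ln (1 + δ))` and the choice `T δ² = 2 ln n` turn it into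
`∑ ⟨z_t, x_t⟩ - Z_i ≤ ln n + T δ`.
-/

open Finset Real

theorem Real.rpow_le_one_sub_mul {γ z : ℝ} (hγ : 0 ≤ γ) (hz0 : 0 ≤ z) (hz1 : z ≤ 1) :
    γ ^ z ≤ 1 - (1 - γ) * z := by
  have := rpow_one_add_le_one_add_mul_self (s := γ - 1) (by linarith) hz0 hz1
  rw [add_sub_cancel] at this
  linarith

theorem Real.log_le_sub_inv_div_two {x : ℝ} (hx : 1 ≤ x) : log x ≤ (x - x⁻¹) / 2 := by
  rw [← sinh_log (by linarith)]
  exact self_le_sinh_iff.mpr (log_nonneg hx)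

/-- The Freund–Schapire bound at `γ = 1/(δ + 1)`, with `δ` tuned so that `T δ² = 2 L`. -/
theorem sub_le_add_mul_of_freund_schapire {δ T L S Z : ℝ} (hδ : 0 < δ) (hTδ : T * δ ^ 2 = 2 * L)
    (hZ0 : 0 ≤ Z) (hZT : Z ≤ T) (h : δ / (δ + 1) * S - Z * log (δ + 1) ≤ L) :
    S - Z ≤ L + T * δ := by
  have hlog : (δ + 1) * log (δ + 1) ≤ ((δ + 1) ^ 2 - 1) / 2 := by
    have := mul_le_mul_of_nonneg_left (log_le_sub_inv_div_two (x := δ + 1) (by linarith))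
      (by linarith : (0:ℝ) ≤ δ + 1)
    rwa [mul_div_assoc', mul_sub, mul_inv_cancel₀ (by positivity), ← sq] at this
  have hS : δ * S - Z * ((δ + 1) * log (δ + 1)) ≤ (δ + 1) * L := by
    rw [div_mul_eq_mul_div, sub_le_iff_le_add, div_le_iff₀ (by positivity)] at h
    nlinarith
  have : δ * (S - Z) ≤ δ * (L + T * δ) := by
    nlinarith [mul_le_mul_of_nonneg_left hlog hZ0, mul_le_mul_of_nonneg_right hZT (sq_nonneg δ)]
  exact le_of_mul_le_mul_left this hδ

structure IsHedgeRun {ι : Type*} [Fintype ι] (γ : ℝ) (z w x : ℕ → ι → ℝ) : Prop where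
  init : ∀ i, w 0 i = 1 / Fintype.card ι
  succ : ∀ t i, w (t + 1) i = w t i * γ ^ z t i
  normalize : ∀ t i, x t i = w t i / ∑ j, w t j

namespace IsHedgeRun

variable {ι : Type*} [Fintype ι] {γ : ℝ} {z w x : ℕ → ι → ℝ}

theorem weight_eq (h : IsHedgeRun γ z w x) (hγ : 0 < γ) (t : ℕ) (i : ι) :
    w t i = w 0 i * γ ^ ∑ s ∈ range t, z s i := by
  induction t with
  | zero => simp
  | succ t ih => rw [h.succ, ih, sum_range_succ, rpow_add hγ, mul_assoc]

theorem weight_pos (h : IsHedgeRun γ z w x) (hγ : 0 < γ) (t : ℕ) (i : ι) : 0 < w t i := by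
  have : 0 < Fintype.card ι := Fintype.card_pos_iff.mpr ⟨i⟩
  rw [h.weight_eq hγ, h.init]
  positivity

theorem sum_init [Nonempty ι] (h : IsHedgeRun γ z w x) : ∑ i, w 0 i = 1 := by
  simp [h.init]

theorem sum_normalize [Nonempty ι] (h : IsHedgeRun γ z w x) (hγ : 0 < γ) (t : ℕ) :
    ∑ i, x t i = 1 := by
  simp_rw [h.normalize, ← sum_div]
  exact div_self (sum_pos (fun i _ => h.weight_pos hγ t i) univ_nonempty).ne'

theorem sum_weight_succ_le [Nonempty ι] (h : IsHedgeRun γ z w x) (hγ : 0 < γ)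
    (hz : ∀ t i, z t i ∈ Set.Icc 0 1) (t : ℕ) :
    ∑ i, w (t + 1) i ≤ (∑ i, w t i) * exp (-((1 - γ) * ∑ i, z t i * x t i)) := by
  have hW : 0 < ∑ i, w t i := sum_pos (fun i _ => h.weight_pos hγ t i) univ_nonempty
  have hwz : ∑ i, w t i * z t i = (∑ i, w t i) * ∑ i, z t i * x t i := by
    rw [mul_sum]
    exact sum_congr rfl fun i _ => by rw [h.normalize]; field_simp
  calc ∑ i, w (t + 1) i
      ≤ ∑ i, w t i * (1 - (1 - γ) * z t i) := by
        simp_rw [h.succ]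
        exact sum_le_sum fun i _ => mul_le_mul_of_nonneg_left
          (rpow_le_one_sub_mul hγ.le (hz t i).1 (hz t i).2) (h.weight_pos hγ t i).le
    _ = (∑ i, w t i) * (1 - (1 - γ) * ∑ i, z t i * x t i) := by
        simp only [mul_sub, mul_one, sum_sub_distrib, mul_left_comm _ (1 - γ), ← mul_sum, hwz]
    _ ≤ (∑ i, w t i) * exp (-((1 - γ) * ∑ i, z t i * x t i)) := by
        gcongr
        linarith [add_one_le_exp (-((1 - γ) * ∑ i, z t i * x t i))]

theorem sum_weight_le [Nonempty ι] (h : IsHedgeRun γ z w x) (hγ : 0 < γ)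
    (hz : ∀ t i, z t i ∈ Set.Icc 0 1) (T : ℕ) :
    ∑ i, w T i ≤ exp (-((1 - γ) * ∑ t ∈ range T, ∑ i, z t i * x t i)) := by
  induction T with
  | zero => simp [h.sum_init]
  | succ T ih =>
    calc ∑ i, w (T + 1) i ≤ (∑ i, w T i) * exp (-((1 - γ) * ∑ i, z T i * x T i)) :=
          h.sum_weight_succ_le hγ hz T
      _ ≤ exp (-((1 - γ) * ∑ t ∈ range T, ∑ i, z t i * x t i)) *
            exp (-((1 - γ) * ∑ i, z T i * x T i)) := by gcongr
      _ = exp (-((1 - γ) * ∑ t ∈ range (T + 1), ∑ i, z t i * x t i)) := by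
          rw [← exp_add, sum_range_succ]; ring_nf

theorem freund_schapire (h : IsHedgeRun γ z w x) (hγ : 0 < γ) (hz : ∀ t i, z t i ∈ Set.Icc 0 1)
    (T : ℕ) (i : ι) :
    (1 - γ) * ∑ t ∈ range T, ∑ j, z t j * x t j + (∑ t ∈ range T, z t i) * log γ ≤
      log (Fintype.card ι) := by
  have : Nonempty ι := ⟨i⟩
  have hcard : (0 : ℝ) < Fintype.card ι := by exact_mod_cast Fintype.card_pos
  have hwi : w T i ≤ exp (-((1 - γ) * ∑ t ∈ range T, ∑ j, z t j * x t j)) :=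
    (single_le_sum (fun j _ => (h.weight_pos hγ T j).le) (mem_univ i)).trans
      (h.sum_weight_le hγ hz T)
  rw [h.weight_eq hγ, h.init, ← log_le_iff_le_exp (by positivity), log_mul (by positivity)
    (by positivity), log_rpow hγ, one_div, log_inv] at hwi
  linarith

end IsHedgeRun

theorem sum_range_sum_affine_sub {ι : Type*} [Fintype ι] {z x : ℕ → ι → ℝ}
    (hx : ∀ t, ∑ j, x t j = 1) (a b : ℝ) (T : ℕ) (i : ι) :
    ∑ t ∈ range T, ∑ j, (a * z t j - b) * x t j - ∑ t ∈ range T, (a * z t i - b) =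
      a * (∑ t ∈ range T, ∑ j, z t j * x t j - ∑ t ∈ range T, z t i) := by
  simp only [sub_mul, sum_sub_distrib, mul_assoc, ← mul_sum, hx, mul_one]
  ring

/-- Averaged-regret bound for the Hedge algorithm with Freund–Schapire's optimized
parameter `γ = 1/(√(2 ln n / T) + 1)` and score function `U(z) = γ^{(z+μ)/(μ+ρ)}`:
`(1/T)(∑_t ⟨ℓ_t,x_t⟩ - min_i ∑_t ℓ_{t,i}) ≤ (μ+ρ)(ln n/T + √(2 ln n/T))`. -/
theorem hedge_optimized_gamma_regret (n : ℕ) (hn : 2 ≤ n) (T : ℕ) (hT : 1 ≤ T)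
    (mu rho : ℝ) (hmurho : 0 < mu + rho)
    (gamma : ℝ) (hgamma : gamma = 1 / (Real.sqrt (2 * Real.log n / T) + 1))
    (ℓ : ℕ → Fin n → ℝ)
    (hℓ : ∀ t, ∀ i, -mu ≤ ℓ t i ∧ ℓ t i ≤ rho)
    (w : ℕ → Fin n → ℝ)
    (hw0 : ∀ i, w 0 i = 1 / n)
    (hwrec : ∀ t i, w (t + 1) i = w t i * gamma ^ ((ℓ t i + mu) / (mu + rho)))
    (x : ℕ → Fin n → ℝ)
    (hx : ∀ t i, x t i = w t i / ∑ j, w t j)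
    (huniv : (Finset.univ : Finset (Fin n)).Nonempty) :
    (1 / (T : ℝ)) * ((∑ t ∈ Finset.range T, ∑ i, ℓ t i * x t i) -
        (Finset.univ.inf' huniv fun i => ∑ t ∈ Finset.range T, ℓ t i)) ≤
      (mu + rho) * (Real.log n / T + Real.sqrt (2 * Real.log n / T)) := by
  set δ := √(2 * log n / T)
  have hT0 : (0 : ℝ) < T := by exact_mod_cast hT
  have hlog : 0 < log n := log_pos (by exact_mod_cast hn)
  have hδ : 0 < δ := sqrt_pos.mpr (by positivity)
  have hTδ : T * δ ^ 2 = 2 * log n := by rw [sq_sqrt (by positivity)]; field_simp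
  have hγ : 0 < gamma := by rw [hgamma]; positivity
  set z : ℕ → Fin n → ℝ := fun t i => (ℓ t i + mu) / (mu + rho)
  have hz : ∀ t i, z t i ∈ Set.Icc 0 1 := fun t i =>
    ⟨div_nonneg (by linarith [hℓ t i]) hmurho.le, (div_le_one hmurho).mpr (by linarith [hℓ t i])⟩
  have hrun : IsHedgeRun gamma z w x := ⟨by simpa using hw0, hwrec, hx⟩
  have hℓz : ℓ = fun t i => (mu + rho) * z t i - mu := by
    funext t i; simp only [z]; field_simp; ring
  rw [one_div_mul_eq_div, div_le_iff₀ hT0, sub_le_comm, le_inf'_iff]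
  intro i _
  have : Nonempty (Fin n) := ⟨i⟩
  rw [sub_le_comm]
  simp only [hℓz]
  rw [sum_range_sum_affine_sub (hrun.sum_normalize hγ)]
  have hfs := hrun.freund_schapire hγ hz T i
  rw [Fintype.card_fin, hgamma, one_div, log_inv, ← one_div, one_sub_div (by positivity),
    add_sub_cancel_right, mul_neg, ← sub_eq_add_neg] at hfs
  have hreg := sub_le_add_mul_of_freund_schapire hδ hTδ (sum_nonneg fun t _ => (hz t i).1)
    (by simpa using sum_le_sum (s := range T) fun t _ => (hz t i).2) hfs
  calc _ ≤ (mu + rho) * (log n + T * δ) := by gcongr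
    _ = _ := by field_simp
end
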